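/- In the setting of the quiver presentation theorem for Gr(X), for all vertices ᵢx, ⱼy of Q' and every path μ from ᵢx to ⱼy in Q', there exist a morphism a ∈ I(i,j) and an element ν ∈ kQ^{(j)}(ⱼ(ax), ⱼy) such that in kQ'/⟨R'⟩ the class of μ equals the class of ν·π(a, ᵢx). (Normal form: every path can be rewritten to move all transport arrows to the right.) -/

import Mathlib

open CategoryTheory Quiver Finsupp
open scoped Classical

noncomputable section

def pcomp {W : Type} [Quiver.{0} W] {k : Type} [Field k] {x y z : W}
    (f : Quiver.Path x y →₀ k) (g : Quiver.Path y z →₀ k) : Quiver.Path x z →₀ k :=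
  f.sum fun p fp => g.sum fun q gq => Finsupp.single (p.comp q) (gq * fp)

def pathsRel {V : Type} [Quiver.{0} V]
    (R : ∀ ⦃i j : V⦄, Quiver.Path i j → Quiver.Path i j → Prop) : HomRel (Paths V) :=
  fun {_ _} p q => R p q

def PresCat {V : Type} [Quiver.{0} V]
    (R : ∀ ⦃i j : V⦄, Quiver.Path i j → Quiver.Path i j → Prop) : Type :=
  CategoryTheory.Quotient (pathsRel R)

noncomputable instance {V : Type} [Quiver.{0} V]
    (R : ∀ ⦃i j : V⦄, Quiver.Path i j → Quiver.Path i j → Prop) : Category (PresCat R) :=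
  inferInstanceAs (Category (CategoryTheory.Quotient (pathsRel R)))

def presObj {V : Type} [Quiver.{0} V]
    (R : ∀ ⦃i j : V⦄, Quiver.Path i j → Quiver.Path i j → Prop) (i : V) : PresCat R := ⟨i⟩

variable {k : Type} [Field k] {V : Type} [Quiver.{0} V]
variable {W : V → Type} [∀ i, Quiver.{0} (W i)]

def RIdeal (Ri : ∀ (i : V) ⦃x y : W i⦄, (Quiver.Path x y →₀ k) → Prop)
    (i : V) (x y : W i) : Submodule k (Quiver.Path x y →₀ k) :=
  Submodule.span k
    {f | ∃ (x' y' : W i) (α : Quiver.Path x x') (r : Quiver.Path x' y' →₀ k)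
      (β : Quiver.Path y' y),
      Ri i r ∧ f = pcomp (Finsupp.single α 1) (pcomp r (Finsupp.single β 1))}

abbrev XH (Ri : ∀ (i : V) ⦃x y : W i⦄, (Quiver.Path x y →₀ k) → Prop)
    (i : V) (x y : W i) : Type :=
  (Quiver.Path x y →₀ k) ⧸ RIdeal Ri i x y

variable (Ri : ∀ (i : V) ⦃x y : W i⦄, (Quiver.Path x y →₀ k) → Prop)

def qcomp {i : V} {x y z : W i} (f : XH Ri i x y) (g : XH Ri i y z) :
    XH Ri i x z :=
  Submodule.Quotient.mk (pcomp (Quotient.out f) (Quotient.out g))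

variable (fobj : ∀ ⦃i j : V⦄, (i ⟶ j) → W i → W j)

def pobj {i j : V} (p : Quiver.Path i j) (x : W i) : W j :=
  Quiver.Path.rec (motive := fun b _ => W b) x (fun _ e ih => fobj e ih) p

variable (fhomQ : ∀ ⦃i j : V⦄ (a : i ⟶ j) ⦃x y : W i⦄,
  XH Ri i x y →ₗ[k] XH Ri j (fobj a x) (fobj a y))

def phomQ {i j : V} (p : Quiver.Path i j) {x y : W i} :
    XH Ri i x y →ₗ[k] XH Ri j (pobj fobj p x) (pobj fobj p y) :=
  Quiver.Path.rec
    (motive := fun b q =>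
      XH Ri i x y →ₗ[k] XH Ri b (pobj fobj q x) (pobj fobj q y))
    LinearMap.id (fun _ e ih => (fhomQ e).comp ih) p

/-- The new arrows of the quiver `Q'`. -/
inductive QArr : (Σ i : V, W i) → (Σ i : V, W i) → Type where
  | inner : ∀ {i : V} {x y : W i}, (x ⟶ y) → QArr ⟨i, x⟩ ⟨i, y⟩
  | trans : ∀ {i j : V} (a : i ⟶ j) (x : W i), QArr ⟨i, x⟩ ⟨j, fobj a x⟩

/-- Paths of the quiver `Q'`. -/
inductive QPath : (Σ i : V, W i) → (Σ i : V, W i) → Type where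
  | nil : ∀ u, QPath u u
  | cons : ∀ {u v w}, QPath u v → QArr fobj v w → QPath u w

/-- Concatenation of paths of `Q'`. -/
def qpComp {u v w : Σ i : V, W i} (p : QPath fobj u v) (q : QPath fobj v w) :
    QPath fobj u w :=
  QPath.rec (motive := fun w' _ => QPath fobj u w')
    p (fun _ a ih => QPath.cons ih a) q

/-- Convolution composition in `kQ'`. -/
def kpcomp {u v w : Σ i : V, W i}
    (f : QPath fobj u v →₀ k) (g : QPath fobj v w →₀ k) :
    QPath fobj u w →₀ k :=
  f.sum fun p fp => g.sum fun q gq => Finsupp.single (qpComp fobj p q) (gq * fp)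

/-- The embedding of paths of `Q⁽ⁱ⁾` as paths of inner arrows in `Q'`. -/
def innerPath {i : V} {x y : W i} (p : Quiver.Path x y) :
    QPath fobj ⟨i, x⟩ ⟨i, y⟩ :=
  Quiver.Path.rec (motive := fun b _ => QPath fobj ⟨i, x⟩ ⟨i, b⟩)
    (QPath.nil _) (fun _ e ih => QPath.cons ih (QArr.inner e)) p

/-- The embedding `σ⁽ⁱ⁾ : kQ⁽ⁱ⁾ → kQ'`. -/
def sigmaMap {i : V} {x y : W i} (f : Quiver.Path x y →₀ k) :
    QPath fobj ⟨i, x⟩ ⟨i, y⟩ →₀ k :=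
  Finsupp.mapDomain (innerPath fobj) f

/-- The path `π(a, ᵢx)` of transport arrows in `Q'` lifting a path `a` of `Q`. -/
def piPath {i j : V} (p : Quiver.Path i j) (x : W i) :
    QPath fobj ⟨i, x⟩ ⟨j, pobj fobj p x⟩ :=
  Quiver.Path.rec (motive := fun b q => QPath fobj ⟨i, x⟩ ⟨b, pobj fobj q x⟩)
    (QPath.nil _) (fun q e ih => QPath.cons ih (QArr.trans e (pobj fobj q x))) p

/-- Transport of a path of `Q'` along an equality of its target vertex. -/
def castQP {u : Σ i : V, W i} {j : V} {y y' : W j} (e : y = y')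
    (p : QPath fobj u ⟨j, y⟩) : QPath fobj u ⟨j, y'⟩ := by
  cases e; exact p

/-- Transport of a hom-class along equalities of objects. -/
def castXH {j : V} {u u' y y' : W j} (e : u = u') (e' : y = y')
    (f : XH Ri j u y) : XH Ri j u' y' := by
  cases e; cases e'; exact f

variable (R : ∀ ⦃i j : V⦄, Quiver.Path i j → Quiver.Path i j → Prop)
variable (lift : ∀ ⦃i j : V⦄ (a : i ⟶ j) ⦃x y : W i⦄ (α : x ⟶ y),
  Quiver.Path (fobj a x) (fobj a y) →₀ k)

/-- The relations `R' = R'₁ ∪ R'₂ ∪ R'₃` on `kQ'`. -/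
inductive RelR' : ∀ ⦃u v : Σ i : V, W i⦄, (QPath fobj u v →₀ k) → Prop where
  | r1 : ∀ {i : V} {x y : W i} (r : Quiver.Path x y →₀ k), Ri i r →
      RelR' (sigmaMap fobj r)
  | r2 : ∀ {i j : V} (g h : Quiver.Path i j), R g h → ∀ (x : W i)
      (e : pobj fobj h x = pobj fobj g x),
      RelR' (Finsupp.single (piPath fobj g x) 1
        - Finsupp.single (castQP fobj e (piPath fobj h x)) 1)
  | r3 : ∀ {i j : V} (a : i ⟶ j) {x y : W i} (α : x ⟶ y),
      RelR' (Finsupp.single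
          (QPath.cons (QPath.cons (QPath.nil ⟨i, x⟩) (QArr.inner α)) (QArr.trans a y)) 1
        - kpcomp fobj (Finsupp.single (QPath.cons (QPath.nil ⟨i, x⟩) (QArr.trans a x)) 1)
            (sigmaMap fobj (lift a α)))

/-- The ideal `⟨R'⟩` of `kQ'`. -/
def IdR' (u v : Σ i : V, W i) : Submodule k (QPath fobj u v →₀ k) :=
  Submodule.span k
    {f | ∃ (u' v' : Σ i : V, W i) (α : QPath fobj u u')
      (g : QPath fobj u' v' →₀ k) (β : QPath fobj v' v),
      RelR' Ri fobj R lift g ∧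
        f = kpcomp fobj (Finsupp.single α 1) (kpcomp fobj g (Finsupp.single β 1))}

end

noncomputable section
variable {k : Type} [Field k] {V : Type} [Quiver.{0} V]
variable {W : V → Type} [∀ i, Quiver.{0} (W i)]
variable (Ri : ∀ (i : V) ⦃x y : W i⦄, (Quiver.Path x y →₀ k) → Prop)
variable (R : ∀ ⦃i j : V⦄, Quiver.Path i j → Quiver.Path i j → Prop)
variable (fobj : ∀ ⦃i j : V⦄, (i ⟶ j) → W i → W j)
variable (fhomQ : ∀ ⦃i j : V⦄ (a : i ⟶ j) ⦃x y : W i⦄,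
  XH Ri i x y →ₗ[k] XH Ri j (fobj a x) (fobj a y))

/-- The hom-sets `I(i,j)` of the presented category `I = ⟨Q ∣ R⟩`. -/
abbrev IHom (i j : V) : Type := presObj R i ⟶ presObj R j

/-- Action of a morphism of `I` on objects (via a representative path). -/
def XobjI {i j : V} (a : IHom R i j) (x : W i) : W j := pobj fobj (Quot.out a) x

/-- Hom-modules of the Grothendieck construction:
`Gr(X)((i,x),(j,y)) = ⨁_{a ∈ I(i,j)} X(j)(X(a)x, y)`. -/
abbrev GrH (i : V) (x : W i) (j : V) (y : W j) : Type :=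
  DirectSum (IHom R i j) (fun a => XH Ri j (XobjI R fobj a x) y)

/-- The identity of `Gr(X)` at `(i,x)`. -/
def grId (i : V) (x : W i)
    (hid : XobjI R fobj (𝟙 (presObj R i)) x = x) : GrH Ri R fobj i x i x :=
  DirectSum.of (fun a => XH Ri i (XobjI R fobj a x) x) (𝟙 (presObj R i))
    (castXH Ri hid.symm rfl
      (Submodule.Quotient.mk (Finsupp.single Quiver.Path.nil 1)))

/-- Composition in `Gr(X)`: `(g ∘ f)_c = ∑_{c = b∘a} g_b · X(b)(f_a)`. -/
def grcomp
    (hX : ∀ (i j l : V) (a : IHom R i j) (b : IHom R j l) (x : W i),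
      XobjI R fobj (a ≫ b) x = XobjI R fobj b (XobjI R fobj a x))
    {i : V} {x : W i} {j : V} {y : W j} {l : V} {z : W l}
    (f : GrH Ri R fobj i x j y) (g : GrH Ri R fobj j y l z) :
    GrH Ri R fobj i x l z :=
  DFinsupp.sum f fun a fa => DFinsupp.sum g fun b gb =>
    DirectSum.of (fun c => XH Ri l (XobjI R fobj c x) z) (a ≫ b)
      (castXH Ri (hX i j l a b x).symm rfl
        (qcomp Ri (phomQ Ri fobj fhomQ (Quot.out b) fa) gb))

end

/-! Induct on `μ`. An inner arrow is absorbed into `ν`. A transport arrow over `a : i ⟶ j`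
that follows `σ(ν)` is pushed in front of it by the relations `R'₃`, one inner arrow at a
time; this replaces `ν` by a representative of `X(a)ν`, and the transport arrow lengthens `π`. -/

noncomputable section NormalForm

variable {k : Type} [Field k] {V : Type} [Quiver.{0} V] {W : V → Type} [∀ i, Quiver.{0} (W i)]
variable (fobj : ∀ ⦃i j : V⦄, (i ⟶ j) → W i → W j)

def QArr.toPath {fobj : ∀ ⦃i j : V⦄, (i ⟶ j) → W i → W j} {u v : Σ i : V, W i}
    (e : QArr fobj u v) : QPath fobj u v :=
  QPath.cons (QPath.nil u) e

@[simp] lemma qpComp_nil {u v : Σ i : V, W i} (p : QPath fobj u v) :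
    qpComp fobj p (QPath.nil v) = p := rfl

@[simp] lemma qpComp_cons {u v w w' : Σ i : V, W i} (p : QPath fobj u v)
    (q : QPath fobj v w) (e : QArr fobj w w') :
    qpComp fobj p (QPath.cons q e) = QPath.cons (qpComp fobj p q) e := rfl

@[simp] lemma nil_qpComp {u v : Σ i : V, W i} (p : QPath fobj u v) :
    qpComp fobj (QPath.nil u) p = p := by
  induction p with
  | nil => rfl
  | cons q e ih => rw [qpComp_cons, ih]

lemma qpComp_assoc {t u v w : Σ i : V, W i} (p : QPath fobj t u)
    (q : QPath fobj u v) (r : QPath fobj v w) :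
    qpComp fobj (qpComp fobj p q) r = qpComp fobj p (qpComp fobj q r) := by
  induction r with
  | nil => rfl
  | cons r e ih => simp only [qpComp_cons, ih]

lemma innerPath_comp {i : V} {x y z : W i} (p : Quiver.Path x y) (q : Quiver.Path y z) :
    innerPath fobj (p.comp q) = qpComp fobj (innerPath fobj p) (innerPath fobj q) := by
  induction q with
  | nil => rfl
  | cons q α ih => exact congrArg (QPath.cons · (QArr.inner α)) ih

lemma kpcomp_single_single {u v w : Σ i : V, W i} (p : QPath fobj u v)
    (q : QPath fobj v w) (c d : k) :
    kpcomp fobj (single p c) (single q d) = single (qpComp fobj p q) (d * c) := by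
  simp [kpcomp]

lemma kpcomp_add_left {u v w : Σ i : V, W i} (f f' : QPath fobj u v →₀ k)
    (g : QPath fobj v w →₀ k) :
    kpcomp fobj (f + f') g = kpcomp fobj f g + kpcomp fobj f' g := by
  refine sum_add_index' (fun p => by simp) fun p c c' => ?_
  rw [← sum_add]
  exact sum_congr fun q _ => by rw [mul_add, single_add]

lemma kpcomp_add_right {u v w : Σ i : V, W i} (f : QPath fobj u v →₀ k)
    (g g' : QPath fobj v w →₀ k) :
    kpcomp fobj f (g + g') = kpcomp fobj f g + kpcomp fobj f g' := by
  rw [kpcomp, kpcomp, kpcomp, ← sum_add]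
  exact sum_congr fun p _ =>
    sum_add_index' (fun q => by simp) fun q d d' => by rw [add_mul, single_add]

lemma kpcomp_smul_left {u v w : Σ i : V, W i} (c : k) (f : QPath fobj u v →₀ k)
    (g : QPath fobj v w →₀ k) :
    kpcomp fobj (c • f) g = c • kpcomp fobj f g := by
  rw [kpcomp, kpcomp, sum_smul_index (fun p => by simp), smul_sum]
  refine sum_congr fun p _ => ?_
  rw [smul_sum]
  exact sum_congr fun q _ => by rw [smul_single, smul_eq_mul, mul_left_comm]

lemma kpcomp_smul_right {u v w : Σ i : V, W i} (c : k) (f : QPath fobj u v →₀ k)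
    (g : QPath fobj v w →₀ k) :
    kpcomp fobj f (c • g) = c • kpcomp fobj f g := by
  rw [kpcomp, kpcomp, smul_sum]
  refine sum_congr fun p _ => ?_
  rw [sum_smul_index (fun q => by simp), smul_sum]
  exact sum_congr fun q _ => by rw [smul_single, smul_eq_mul, mul_assoc]

def kpcompₗ (u v w : Σ i : V, W i) :
    (QPath fobj u v →₀ k) →ₗ[k] (QPath fobj v w →₀ k) →ₗ[k]
      (QPath fobj u w →₀ k) :=
  LinearMap.mk₂ k (kpcomp fobj) (kpcomp_add_left fobj) (kpcomp_smul_left fobj)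
    (kpcomp_add_right fobj) (kpcomp_smul_right fobj)

@[simp] lemma kpcomp_zero_left {u v w : Σ i : V, W i} (g : QPath fobj v w →₀ k) :
    kpcomp fobj (0 : QPath fobj u v →₀ k) g = 0 :=
  (kpcompₗ fobj u v w).map_zero₂ g

@[simp] lemma kpcomp_zero_right {u v w : Σ i : V, W i} (f : QPath fobj u v →₀ k) :
    kpcomp fobj f (0 : QPath fobj v w →₀ k) = 0 :=
  map_zero (kpcompₗ fobj u v w f)

lemma kpcomp_sub_left {u v w : Σ i : V, W i} (f f' : QPath fobj u v →₀ k)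
    (g : QPath fobj v w →₀ k) :
    kpcomp fobj (f - f') g = kpcomp fobj f g - kpcomp fobj f' g :=
  (kpcompₗ fobj u v w).map_sub₂ f f' g

lemma kpcomp_sub_right {u v w : Σ i : V, W i} (f : QPath fobj u v →₀ k)
    (g g' : QPath fobj v w →₀ k) :
    kpcomp fobj f (g - g') = kpcomp fobj f g - kpcomp fobj f g' :=
  map_sub (kpcompₗ fobj u v w f) g g'

lemma kpcomp_assoc {t u v w : Σ i : V, W i} (f : QPath fobj t u →₀ k)
    (g : QPath fobj u v →₀ k) (h : QPath fobj v w →₀ k) :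
    kpcomp fobj (kpcomp fobj f g) h = kpcomp fobj f (kpcomp fobj g h) := by
  induction f using Finsupp.induction_linear with
  | zero => simp
  | add f₁ f₂ ih₁ ih₂ => simp only [kpcomp_add_left, ih₁, ih₂]
  | single p c =>
    induction g using Finsupp.induction_linear with
    | zero => simp
    | add g₁ g₂ ih₁ ih₂ => simp only [kpcomp_add_left, kpcomp_add_right, ih₁, ih₂]
    | single q d =>
      induction h using Finsupp.induction_linear with
      | zero => simp
      | add h₁ h₂ ih₁ ih₂ => simp only [kpcomp_add_right, ih₁, ih₂]
      | single r e => simp only [kpcomp_single_single, qpComp_assoc, mul_assoc]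

lemma kpcomp_nil_left {u v : Σ i : V, W i} (g : QPath fobj u v →₀ k) :
    kpcomp fobj (single (QPath.nil u) 1) g = g := by
  induction g using Finsupp.induction_linear with
  | zero => simp
  | add g₁ g₂ ih₁ ih₂ => rw [kpcomp_add_right, ih₁, ih₂]
  | single q d => rw [kpcomp_single_single, nil_qpComp, mul_one]

lemma kpcomp_nil_right {u v : Σ i : V, W i} (f : QPath fobj u v →₀ k) :
    kpcomp fobj f (single (QPath.nil v) 1) = f := by
  induction f using Finsupp.induction_linear with
  | zero => simp
  | add f₁ f₂ ih₁ ih₂ => rw [kpcomp_add_left, ih₁, ih₂]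
  | single p c => rw [kpcomp_single_single, qpComp_nil, one_mul]

lemma single_cons_eq_kpcomp {u v w : Σ i : V, W i} (p : QPath fobj u v) (e : QArr fobj v w) :
    single (QPath.cons p e) (1 : k) = kpcomp fobj (single p 1) (single e.toPath 1) := by
  rw [kpcomp_single_single, one_mul]
  rfl

lemma pcomp_single_single {Z : Type} [Quiver.{0} Z] {x y z : Z}
    (p : Quiver.Path x y) (q : Quiver.Path y z) (c d : k) :
    pcomp (single p c) (single q d) = single (p.comp q) (d * c) := by
  simp [pcomp]

lemma pcomp_add_left {Z : Type} [Quiver.{0} Z] {x y z : Z}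
    (f f' : Quiver.Path x y →₀ k) (g : Quiver.Path y z →₀ k) :
    pcomp (f + f') g = pcomp f g + pcomp f' g := by
  refine sum_add_index' (fun p => by simp) fun p c c' => ?_
  rw [← sum_add]
  exact sum_congr fun q _ => by rw [mul_add, single_add]

lemma pcomp_add_right {Z : Type} [Quiver.{0} Z] {x y z : Z}
    (f : Quiver.Path x y →₀ k) (g g' : Quiver.Path y z →₀ k) :
    pcomp f (g + g') = pcomp f g + pcomp f g' := by
  rw [pcomp, pcomp, pcomp, ← sum_add]
  exact sum_congr fun p _ =>
    sum_add_index' (fun q => by simp) fun q d d' => by rw [add_mul, single_add]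

lemma sigmaMap_single {i : V} {x y : W i} (p : Quiver.Path x y) (c : k) :
    sigmaMap fobj (single p c) = single (innerPath fobj p) c :=
  mapDomain_single

lemma sigmaMap_add {i : V} {x y : W i} (f g : Quiver.Path x y →₀ k) :
    sigmaMap fobj (f + g) = sigmaMap fobj f + sigmaMap fobj g :=
  mapDomain_add

lemma sigmaMap_pcomp {i : V} {x y z : W i} (f : Quiver.Path x y →₀ k)
    (g : Quiver.Path y z →₀ k) :
    sigmaMap fobj (pcomp f g) = kpcomp fobj (sigmaMap fobj f) (sigmaMap fobj g) := by
  induction f using Finsupp.induction_linear with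
  | zero => simp [pcomp, sigmaMap]
  | add f₁ f₂ ih₁ ih₂ =>
    rw [pcomp_add_left, sigmaMap_add, sigmaMap_add, kpcomp_add_left, ih₁, ih₂]
  | single p c =>
    induction g using Finsupp.induction_linear with
    | zero => simp [pcomp, sigmaMap]
    | add g₁ g₂ ih₁ ih₂ =>
      rw [pcomp_add_right, sigmaMap_add, sigmaMap_add, kpcomp_add_right, ih₁, ih₂]
    | single q d =>
      rw [pcomp_single_single, sigmaMap_single, sigmaMap_single, sigmaMap_single,
        kpcomp_single_single, innerPath_comp]

variable (Ri : ∀ (i : V) ⦃x y : W i⦄, (Quiver.Path x y →₀ k) → Prop)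
variable (R : ∀ ⦃i j : V⦄, Quiver.Path i j → Quiver.Path i j → Prop)
variable (lift : ∀ ⦃i j : V⦄ (a : i ⟶ j) ⦃x y : W i⦄, (x ⟶ y) →
  Quiver.Path (fobj a x) (fobj a y) →₀ k)

local notation "⟦" f "⟧ᵣ" => (Submodule.Quotient.mk f : _ ⧸ IdR' Ri fobj R lift _ _)

lemma kpcomp_relR'_mem_IdR' {u v u' v' : Σ i : V, W i} (α : QPath fobj u u')
    {g : QPath fobj u' v' →₀ k} (hg : RelR' Ri fobj R lift g) (β : QPath fobj v' v) :
    kpcomp fobj (single α 1) (kpcomp fobj g (single β 1)) ∈ IdR' Ri fobj R lift u v :=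
  Submodule.subset_span ⟨u', v', α, g, β, hg, rfl⟩

lemma mk_eq_of_relR' {u v : Σ i : V, W i} {f g : QPath fobj u v →₀ k}
    (h : RelR' Ri fobj R lift (f - g)) : ⟦f⟧ᵣ = ⟦g⟧ᵣ := by
  rw [Submodule.Quotient.eq]
  simpa only [kpcomp_nil_left, kpcomp_nil_right] using
    kpcomp_relR'_mem_IdR' fobj Ri R lift (QPath.nil u) h (QPath.nil v)

lemma kpcomp_mem_IdR'_left {t u v : Σ i : V, W i} (h : QPath fobj t u →₀ k)
    {f : QPath fobj u v →₀ k} (hf : f ∈ IdR' Ri fobj R lift u v) :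
    kpcomp fobj h f ∈ IdR' Ri fobj R lift t v := by
  induction hf using Submodule.span_induction with
  | mem f hf =>
    obtain ⟨u', v', α, g, β, hg, rfl⟩ := hf
    induction h using Finsupp.induction_linear with
    | zero => simp
    | add h₁ h₂ ih₁ ih₂ => rw [kpcomp_add_left]; exact add_mem ih₁ ih₂
    | single γ c =>
      rw [← smul_single_one γ c, kpcomp_smul_left, ← kpcomp_assoc, kpcomp_single_single,
        one_mul]
      exact Submodule.smul_mem _ c (kpcomp_relR'_mem_IdR' fobj Ri R lift _ hg β)
  | zero => simp
  | add f₁ f₂ _ _ ih₁ ih₂ => rw [kpcomp_add_right]; exact add_mem ih₁ ih₂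
  | smul c f _ ih => rw [kpcomp_smul_right]; exact Submodule.smul_mem _ c ih

lemma kpcomp_mem_IdR'_right {u v w : Σ i : V, W i} {f : QPath fobj u v →₀ k}
    (hf : f ∈ IdR' Ri fobj R lift u v) (h : QPath fobj v w →₀ k) :
    kpcomp fobj f h ∈ IdR' Ri fobj R lift u w := by
  induction hf using Submodule.span_induction with
  | mem f hf =>
    obtain ⟨u', v', α, g, β, hg, rfl⟩ := hf
    induction h using Finsupp.induction_linear with
    | zero => simp
    | add h₁ h₂ ih₁ ih₂ => rw [kpcomp_add_right]; exact add_mem ih₁ ih₂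
    | single δ c =>
      rw [← smul_single_one δ c, kpcomp_smul_right, kpcomp_assoc, kpcomp_assoc,
        kpcomp_single_single, one_mul]
      exact Submodule.smul_mem _ c (kpcomp_relR'_mem_IdR' fobj Ri R lift α hg _)
  | zero => simp
  | add f₁ f₂ _ _ ih₁ ih₂ => rw [kpcomp_add_left]; exact add_mem ih₁ ih₂
  | smul c f _ ih => rw [kpcomp_smul_left]; exact Submodule.smul_mem _ c ih

lemma mk_kpcomp_congr_left {u v w : Σ i : V, W i} {f f' : QPath fobj u v →₀ k}
    (h : ⟦f⟧ᵣ = ⟦f'⟧ᵣ) (g : QPath fobj v w →₀ k) :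
    ⟦kpcomp fobj f g⟧ᵣ = ⟦kpcomp fobj f' g⟧ᵣ := by
  rw [Submodule.Quotient.eq] at h ⊢
  rw [← kpcomp_sub_left]
  exact kpcomp_mem_IdR'_right fobj Ri R lift h g

lemma mk_kpcomp_congr_right {u v w : Σ i : V, W i} (f : QPath fobj u v →₀ k)
    {g g' : QPath fobj v w →₀ k} (h : ⟦g⟧ᵣ = ⟦g'⟧ᵣ) :
    ⟦kpcomp fobj f g⟧ᵣ = ⟦kpcomp fobj f g'⟧ᵣ := by
  rw [Submodule.Quotient.eq] at h ⊢
  rw [← kpcomp_sub_right]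
  exact kpcomp_mem_IdR'_left fobj Ri R lift f h

-- A representative in `kQ⁽ʲ⁾` of the image of a path under the functor `X(a)`.
def pathLift {i j : V} (a : i ⟶ j) :
    ∀ {x y : W i}, Quiver.Path x y → (Quiver.Path (fobj a x) (fobj a y) →₀ k)
  | _, _, .nil => single .nil 1
  | _, _, .cons q α => pcomp (pathLift a q) (lift a α)

def pathLiftₗ {i j : V} (a : i ⟶ j) {x y : W i} :
    (Quiver.Path x y →₀ k) →ₗ[k] (Quiver.Path (fobj a x) (fobj a y) →₀ k) :=
  linearCombination k (pathLift fobj lift a)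

lemma mk_sigmaMap_single_kpcomp_trans {i j : V} (a : i ⟶ j) {x y : W i}
    (q : Quiver.Path x y) :
    ⟦kpcomp fobj (sigmaMap fobj (single q 1)) (single (QArr.trans a y).toPath 1)⟧ᵣ
      = ⟦kpcomp fobj (single (QArr.trans a x).toPath 1)
          (sigmaMap fobj (pathLift fobj lift a q))⟧ᵣ := by
  induction q with
  | nil =>
    rw [pathLift, sigmaMap_single, sigmaMap_single]
    exact congrArg _ ((kpcomp_nil_left fobj _).trans (kpcomp_nil_right fobj _).symm)
  | @cons b c q α ih =>
    calc ⟦kpcomp fobj (sigmaMap fobj (single (q.cons α) 1))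
            (single (QArr.trans a c).toPath 1)⟧ᵣ
        = ⟦kpcomp fobj (sigmaMap fobj (single q 1))
            (single ((QArr.inner α).toPath.cons (QArr.trans a c)) 1)⟧ᵣ := by
          simp only [sigmaMap_single, kpcomp_single_single]; rfl
      _ = ⟦kpcomp fobj (sigmaMap fobj (single q 1))
            (kpcomp fobj (single (QArr.trans a b).toPath 1) (sigmaMap fobj (lift a α)))⟧ᵣ :=
          mk_kpcomp_congr_right fobj Ri R lift _
            (mk_eq_of_relR' fobj Ri R lift (RelR'.r3 a α))
      _ = ⟦kpcomp fobj (kpcomp fobj (single (QArr.trans a x).toPath 1)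
            (sigmaMap fobj (pathLift fobj lift a q))) (sigmaMap fobj (lift a α))⟧ᵣ := by
          rw [← kpcomp_assoc]; exact mk_kpcomp_congr_left fobj Ri R lift ih _
      _ = ⟦kpcomp fobj (single (QArr.trans a x).toPath 1)
            (sigmaMap fobj (pathLift fobj lift a (q.cons α)))⟧ᵣ := by
          rw [kpcomp_assoc, ← sigmaMap_pcomp, pathLift]

lemma mk_sigmaMap_kpcomp_trans {i j : V} (a : i ⟶ j) {x y : W i}
    (ν : Quiver.Path x y →₀ k) :
    ⟦kpcomp fobj (sigmaMap fobj ν) (single (QArr.trans a y).toPath 1)⟧ᵣ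
      = ⟦kpcomp fobj (single (QArr.trans a x).toPath 1)
          (sigmaMap fobj (pathLiftₗ fobj lift a ν))⟧ᵣ := by
  suffices (IdR' Ri fobj R lift _ _).mkQ
        ∘ₗ (kpcompₗ fobj _ _ _).flip (single (QArr.trans a y).toPath 1)
        ∘ₗ lmapDomain k k (innerPath fobj)
      = (IdR' Ri fobj R lift _ _).mkQ
        ∘ₗ kpcompₗ fobj _ _ _ (single (QArr.trans a x).toPath 1)
        ∘ₗ lmapDomain k k (innerPath fobj) ∘ₗ pathLiftₗ fobj lift a from
    LinearMap.congr_fun this ν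
  ext q
  simpa [pathLiftₗ, kpcompₗ, sigmaMap] using mk_sigmaMap_single_kpcomp_trans fobj Ri R lift a q

theorem normal_form (u v : Σ i : V, W i) (μ : QPath fobj u v) :
    ∃ (a : Quiver.Path u.1 v.1) (ν : Quiver.Path (pobj fobj a u.2) v.2 →₀ k),
      ⟦single μ 1⟧ᵣ
        = ⟦kpcomp fobj (single (piPath fobj a u.2) 1) (sigmaMap fobj ν)⟧ᵣ := by
  induction μ with
  | nil =>
    refine ⟨.nil, single .nil 1, congrArg _ ?_⟩
    show _ = kpcomp fobj (single (QPath.nil u) 1) (sigmaMap fobj (single (.nil : Path u.2 u.2) 1))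
    rw [sigmaMap_single, kpcomp_single_single, mul_one]
    rfl
  | cons p e ih =>
    obtain ⟨a, ν, h⟩ := ih
    rw [single_cons_eq_kpcomp, mk_kpcomp_congr_left fobj Ri R lift h, kpcomp_assoc]
    cases e with
    | inner α =>
      refine ⟨a, pcomp ν (single α.toPath 1), ?_⟩
      rw [sigmaMap_pcomp, sigmaMap_single]
      rfl
    | trans a₀ x =>
      refine ⟨a.cons a₀, pathLiftₗ fobj lift a₀ ν, ?_⟩
      rw [mk_kpcomp_congr_right fobj Ri R lift _ (mk_sigmaMap_kpcomp_trans fobj Ri R lift a₀ ν),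
        ← kpcomp_assoc, kpcomp_single_single, one_mul]
      rfl

end NormalForm

/-- (Normal form) Every path `μ : ᵢx → ⱼy` of `Q'` is, modulo
`⟨R'⟩`, of the form `ν ∘ π(a, ᵢx)` with `a ∈ I(i,j)` (represented by a path of `Q`)
and `ν ∈ kQ⁽ʲ⁾(ⱼ(ax), ⱼy)`: all transport arrows can be moved to the right. -/
theorem stmt18 {k : Type} [Field k] {V : Type} [Quiver.{0} V]
    {W : V → Type} [∀ i, Quiver.{0} (W i)]
    (Ri : ∀ (i : V) ⦃x y : W i⦄, (Quiver.Path x y →₀ k) → Prop)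
    (R : ∀ ⦃i j : V⦄, Quiver.Path i j → Quiver.Path i j → Prop)
    (fobj : ∀ ⦃i j : V⦄, (i ⟶ j) → W i → W j)
    (lift : ∀ ⦃i j : V⦄ (a : i ⟶ j) ⦃x y : W i⦄ (α : x ⟶ y),
      Quiver.Path (fobj a x) (fobj a y) →₀ k) :
    ∀ (i : V) (x : W i) (j : V) (y : W j) (μ : QPath fobj ⟨i, x⟩ ⟨j, y⟩),
      ∃ (a : Quiver.Path i j) (ν : Quiver.Path (pobj fobj a x) y →₀ k),
        (Submodule.Quotient.mk (Finsupp.single μ 1)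
            : (QPath fobj ⟨i, x⟩ ⟨j, y⟩ →₀ k) ⧸ IdR' Ri fobj R lift ⟨i, x⟩ ⟨j, y⟩)
          = Submodule.Quotient.mk
              (kpcomp fobj (Finsupp.single (piPath fobj a x) 1) (sigmaMap fobj ν)) :=
  fun i x j y μ => normal_form fobj Ri R lift ⟨i, x⟩ ⟨j, y⟩ μ
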